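/- The boundary value problem u'''(t) = -e^{u(t)} on (0,1) with u(0)=u'(0)=u'(1)=0 has a unique solution u satisfying 0 ≤ u(t) ≤ 1.1/12, 0 ≤ u'(t) ≤ 1.1/8, |u''(t)| ≤ 1.1/2; in particular u is nonnegative and nondecreasing on [0,1]. -/

import Mathlib

/-- `u` solves `u''' = -exp u` on `(0,1)` with `u(0)=u'(0)=u'(1)=0`. -/
def IsSolution (u : ℝ → ℝ) : Prop :=
  ContDiff ℝ 2 u ∧
  (∀ t ∈ Set.Ioo (0:ℝ) 1,
    HasDerivAt (deriv (deriv u)) (-Real.exp (u t)) t) ∧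
  u 0 = 0 ∧ deriv u 0 = 0 ∧ deriv u 1 = 0

def InBounds (u : ℝ → ℝ) : Prop :=
  ∀ t ∈ Set.Icc (0:ℝ) 1,
    u t ∈ Set.Icc 0 ((1.1 : ℝ) / 12) ∧ deriv u t ∈ Set.Icc 0 ((1.1 : ℝ) / 8) ∧ |deriv (deriv u) t| ≤ (1.1 : ℝ) / 2

/-!
A solution is a fixed point of `u ↦ T (exp ∘ u)`, where `T f` solves `w''' = -f`,
`w 0 = w' 0 = w' 1 = 0`: it is the primitive, vanishing at `0`, of the Green's-function solution
of `v'' = -f`, `v 0 = v 1 = 0`, whose kernel is nonnegative. Hence `T f ≥ 0` when `f ≥ 0`, and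
`|f| ≤ K` gives `|T f| ≤ K / 12`, `|(T f)'| ≤ K t (1 - t) / 2 ≤ K / 8` and `|(T f)''| ≤ K / 2`.
Since `w''' = 0` with these boundary conditions forces `w'' = c`, `w' = c t`, `c = 0`, the problem
has no other solutions, so `T` is linear. On `X = {0 ≤ u ≤ 1.1 / 12}` the function `exp` takes
values in `[0, 1.1]` and is `1.1`-Lipschitz, so `u ↦ T (exp ∘ u)` maps `X` into itself with
Lipschitz constant `1.1 / 12 < 1`. Its fixed point is the solution, and a solution obeying the
bounds lies in `X` and is a fixed point, hence the same one.
-/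

open Set intervalIntegral

theorem abs_integral_mul_le_of_abs_le {f g : ℝ → ℝ} {a b K : ℝ} (hab : a ≤ b)
    (hg : Continuous g) (hg₀ : ∀ s ∈ Icc a b, 0 ≤ g s) (hf : ∀ s ∈ Icc a b, |f s| ≤ K) :
    |∫ s in a..b, g s * f s| ≤ K * ∫ s in a..b, g s := by
  rw [← intervalIntegral.integral_const_mul K g]
  refine norm_integral_le_of_norm_le (f := fun s => g s * f s) hab (.of_forall fun s hs => ?_)
    ((continuous_const.mul hg).intervalIntegrable _ _)
  have hs' : s ∈ Icc a b := Ioc_subset_Icc_self hs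
  rw [Real.norm_eq_abs, abs_mul, abs_of_nonneg (hg₀ s hs'), mul_comm K]
  exact mul_le_mul_of_nonneg_left (hf s hs') (hg₀ s hs')

theorem constant_of_hasDerivAt_zero {g : ℝ → ℝ} {a b : ℝ} (hg : ContinuousOn g (Icc a b))
    (hg' : ∀ x ∈ Ioo a b, HasDerivAt g 0 x) : ∀ x ∈ Icc a b, g x = g a := by
  rintro x ⟨hax, hxb⟩
  rcases hax.eq_or_lt with rfl | hax
  · rfl
  obtain ⟨c, hc, hslope⟩ := exists_hasDerivAt_eq_slope g (fun _ => 0) hax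
    (hg.mono (Icc_subset_Icc_right hxb)) fun c hc => hg' c ⟨hc.1, hc.2.trans_le hxb⟩
  rw [eq_comm, div_eq_zero_iff, sub_eq_zero, sub_eq_zero] at hslope
  exact hslope.resolve_right hax.ne'

def IsBVPSolution (f w : ℝ → ℝ) : Prop :=
  ContDiff ℝ 2 w ∧ (∀ t ∈ Ioo (0:ℝ) 1, HasDerivAt (deriv (deriv w)) (-f t) t) ∧
  w 0 = 0 ∧ deriv w 0 = 0 ∧ deriv w 1 = 0

theorem isSolution_iff (u : ℝ → ℝ) : IsSolution u ↔ IsBVPSolution (fun t => Real.exp (u t)) u :=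
  Iff.rfl

/-- The Green's-function solution of `w'' = -f`, `w 0 = w 1 = 0`. -/
noncomputable def dirichletSol (f : ℝ → ℝ) (t : ℝ) : ℝ :=
  (1 - t) * (∫ s in 0..t, s * f s) + t * ∫ s in t..1, (1 - s) * f s

noncomputable def dirichletSolDeriv (f : ℝ → ℝ) (t : ℝ) : ℝ :=
  (∫ s in t..1, (1 - s) * f s) - ∫ s in 0..t, s * f s

noncomputable def bvpSol (f : ℝ → ℝ) (t : ℝ) : ℝ := ∫ s in 0..t, dirichletSol f s

section Regularity

variable {f : ℝ → ℝ}

theorem hasDerivAt_integral_id_mul (hf : Continuous f) (t : ℝ) :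
    HasDerivAt (fun t => ∫ s in 0..t, s * f s) (t * f t) t :=
  (continuous_id.mul hf).integral_hasStrictDerivAt 0 t |>.hasDerivAt

theorem hasDerivAt_integral_one_sub_mul (hf : Continuous f) (t : ℝ) :
    HasDerivAt (fun t => ∫ s in t..1, (1 - s) * f s) (-((1 - t) * f t)) t := by
  have hg : Continuous fun s => (1 - s) * f s := (continuous_const.sub continuous_id).mul hf
  exact integral_hasDerivAt_left (hg.intervalIntegrable _ _) (hg.stronglyMeasurableAtFilter _ _)
    hg.continuousAt

theorem hasDerivAt_dirichletSolDeriv (hf : Continuous f) (t : ℝ) :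
    HasDerivAt (dirichletSolDeriv f) (-f t) t :=
  ((hasDerivAt_integral_one_sub_mul hf t).sub (hasDerivAt_integral_id_mul hf t)).congr_deriv
    (by ring)

theorem hasDerivAt_dirichletSol (hf : Continuous f) (t : ℝ) :
    HasDerivAt (dirichletSol f) (dirichletSolDeriv f t) t :=
  ((((hasDerivAt_id t).const_sub 1).mul (hasDerivAt_integral_id_mul hf t)).add
    ((hasDerivAt_id t).mul (hasDerivAt_integral_one_sub_mul hf t))).congr_deriv
    (by simp only [dirichletSolDeriv, id]; ring)

theorem continuous_dirichletSol (hf : Continuous f) : Continuous (dirichletSol f) :=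
  continuous_iff_continuousAt.2 fun t => (hasDerivAt_dirichletSol hf t).continuousAt

theorem hasDerivAt_bvpSol (hf : Continuous f) (t : ℝ) :
    HasDerivAt (bvpSol f) (dirichletSol f t) t :=
  (continuous_dirichletSol hf).integral_hasStrictDerivAt 0 t |>.hasDerivAt

theorem deriv_bvpSol (hf : Continuous f) : deriv (bvpSol f) = dirichletSol f :=
  funext fun t => (hasDerivAt_bvpSol hf t).deriv

theorem deriv_dirichletSol (hf : Continuous f) : deriv (dirichletSol f) = dirichletSolDeriv f :=
  funext fun t => (hasDerivAt_dirichletSol hf t).deriv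

theorem contDiff_bvpSol (hf : Continuous f) : ContDiff ℝ 2 (bvpSol f) := by
  rw [show (2 : WithTop ℕ∞) = 1 + 1 from rfl, contDiff_succ_iff_deriv, deriv_bvpSol hf,
    contDiff_one_iff_deriv, deriv_dirichletSol hf]
  exact ⟨fun t => (hasDerivAt_bvpSol hf t).differentiableAt, by simp,
    fun t => (hasDerivAt_dirichletSol hf t).differentiableAt,
    continuous_iff_continuousAt.2 fun t => (hasDerivAt_dirichletSolDeriv hf t).continuousAt⟩

theorem isBVPSolution_bvpSol (hf : Continuous f) : IsBVPSolution f (bvpSol f) := by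
  refine ⟨contDiff_bvpSol hf, fun t _ => ?_, by simp [bvpSol], ?_, ?_⟩
  · rw [deriv_bvpSol hf, deriv_dirichletSol hf]
    exact hasDerivAt_dirichletSolDeriv hf t
  all_goals simp [deriv_bvpSol hf, dirichletSol]

end Regularity

section Uniqueness

variable {f g w v : ℝ → ℝ}

theorem IsBVPSolution.sub (hw : IsBVPSolution f w) (hv : IsBVPSolution g v) :
    IsBVPSolution (f - g) (w - v) := by
  obtain ⟨hw2, hw3, hw0, hw'0, hw'1⟩ := hw
  obtain ⟨hv2, hv3, hv0, hv'0, hv'1⟩ := hv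
  have hderiv : deriv (w - v) = deriv w - deriv v :=
    funext fun t => deriv_sub (hw2.differentiable two_ne_zero t) (hv2.differentiable two_ne_zero t)
  have hderiv2 : deriv (deriv (w - v)) = deriv (deriv w) - deriv (deriv v) := by
    rw [hderiv]
    exact funext fun t =>
      deriv_sub (hw2.differentiable_deriv_two t) (hv2.differentiable_deriv_two t)
  refine ⟨hw2.sub hv2, fun t ht => ?_, by simp [hw0, hv0], ?_, ?_⟩
  · rw [hderiv2]
    exact ((hw3 t ht).sub (hv3 t ht)).congr_deriv (by simp only [Pi.sub_apply]; ring)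
  all_goals simp [hderiv, hw'0, hv'0, hw'1, hv'1]

theorem IsBVPSolution.eqOn_zero (hw : IsBVPSolution 0 w) : EqOn w 0 (Icc 0 1) := by
  obtain ⟨hw2, hw3, hw0, hw'0, hw'1⟩ := hw
  have hw1 : ContDiff ℝ 1 (deriv w) := hw2.deriv' (n := 1)
  set c := deriv (deriv w) 0
  have hw''_const : ∀ t ∈ Icc (0:ℝ) 1, deriv (deriv w) t = c :=
    constant_of_hasDerivAt_zero hw1.continuous_deriv_one.continuousOn fun t ht => by
      simpa using hw3 t ht
  have hw'_lin : ∀ t ∈ Icc (0:ℝ) 1, deriv w t - c * t = 0 := by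
    refine fun t ht => (constant_of_hasDerivAt_zero (g := fun t => deriv w t - c * t)
      (hw1.continuous.sub (continuous_const.mul continuous_id)).continuousOn (fun s hs => ?_)
      t ht).trans (by simp [hw'0])
    exact ((hw2.differentiable_deriv_two s).hasDerivAt.sub
      ((hasDerivAt_id s).const_mul c)).congr_deriv (by simp [hw''_const s (Ioo_subset_Icc_self hs)])
  have hc : c = 0 := by simpa [hw'1] using hw'_lin 1 (right_mem_Icc.2 zero_le_one)
  intro t ht
  refine (constant_of_hasDerivAt_zero (hw2.continuous.continuousOn) (fun s hs => ?_) t ht).trans hw0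
  exact (hw2.differentiable two_ne_zero s).hasDerivAt.congr_deriv
    (by simpa [hc] using hw'_lin s (Ioo_subset_Icc_self hs))

theorem IsBVPSolution.eqOn (hw : IsBVPSolution f w) (hv : IsBVPSolution f v) :
    EqOn w v (Icc 0 1) := fun _ ht =>
  sub_eq_zero.1 ((sub_self f ▸ hw.sub hv).eqOn_zero ht)

theorem IsBVPSolution.congr (hw : IsBVPSolution f w) (hfg : EqOn f g (Ioo 0 1)) :
    IsBVPSolution g w := by
  obtain ⟨hw2, hw3, hw0⟩ := hw
  exact ⟨hw2, fun t ht => hfg ht ▸ hw3 t ht, hw0⟩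

theorem bvpSol_sub (hf : Continuous f) (hg : Continuous g) :
    EqOn (bvpSol (f - g)) (bvpSol f - bvpSol g) (Icc 0 1) :=
  (isBVPSolution_bvpSol (hf.sub hg)).eqOn
    ((isBVPSolution_bvpSol hf).sub (isBVPSolution_bvpSol hg))

end Uniqueness

section Bounds

variable {f : ℝ → ℝ} {K t : ℝ}

theorem abs_integral_id_mul_le (hf : ∀ s ∈ Icc 0 1, |f s| ≤ K) (ht : t ∈ Icc (0:ℝ) 1) :
    |∫ s in 0..t, s * f s| ≤ K * (t ^ 2 / 2) := by
  have h := abs_integral_mul_le_of_abs_le ht.1 continuous_id (fun s hs => hs.1)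
    fun s hs => hf s ⟨hs.1, hs.2.trans ht.2⟩
  simpa using h

theorem abs_integral_one_sub_mul_le (hf : ∀ s ∈ Icc 0 1, |f s| ≤ K) (ht : t ∈ Icc (0:ℝ) 1) :
    |∫ s in t..1, (1 - s) * f s| ≤ K * ((1 - t) ^ 2 / 2) := by
  have h := abs_integral_mul_le_of_abs_le (g := fun s => 1 - s) ht.2
    (continuous_const.sub continuous_id)
    (fun s hs => sub_nonneg.2 hs.2) fun s hs => hf s ⟨ht.1.trans hs.1, hs.2⟩
  convert h using 2
  rw [integral_sub intervalIntegrable_const intervalIntegrable_id, integral_const, integral_id,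
    smul_eq_mul]
  ring

theorem dirichletSol_nonneg (hf : ∀ s ∈ Icc 0 1, 0 ≤ f s) (ht : t ∈ Icc (0:ℝ) 1) :
    0 ≤ dirichletSol f t := by
  have hP : 0 ≤ ∫ s in 0..t, s * f s :=
    integral_nonneg ht.1 fun s hs => mul_nonneg hs.1 (hf s ⟨hs.1, hs.2.trans ht.2⟩)
  have hQ : 0 ≤ ∫ s in t..1, (1 - s) * f s :=
    integral_nonneg ht.2 fun s hs => mul_nonneg (sub_nonneg.2 hs.2) (hf s ⟨ht.1.trans hs.1, hs.2⟩)
  exact add_nonneg (mul_nonneg (sub_nonneg.2 ht.2) hP) (mul_nonneg ht.1 hQ)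

theorem abs_dirichletSol_le (hf : ∀ s ∈ Icc 0 1, |f s| ≤ K) (ht : t ∈ Icc (0:ℝ) 1) :
    |dirichletSol f t| ≤ K * (t * (1 - t) / 2) := by
  have hP := abs_integral_id_mul_le hf ht
  have hQ := abs_integral_one_sub_mul_le hf ht
  have h1t : 0 ≤ 1 - t := sub_nonneg.2 ht.2
  calc |dirichletSol f t|
      ≤ (1 - t) * |∫ s in 0..t, s * f s| + t * |∫ s in t..1, (1 - s) * f s| := by
        refine (abs_add_le _ _).trans_eq ?_
        rw [abs_mul, abs_mul, abs_of_nonneg h1t, abs_of_nonneg ht.1]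
    _ ≤ (1 - t) * (K * (t ^ 2 / 2)) + t * (K * ((1 - t) ^ 2 / 2)) := by gcongr; exact ht.1
    _ = K * (t * (1 - t) / 2) := by ring

theorem abs_dirichletSolDeriv_le (hf : ∀ s ∈ Icc 0 1, |f s| ≤ K) (ht : t ∈ Icc (0:ℝ) 1) :
    |dirichletSolDeriv f t| ≤ K / 2 := by
  have hK : 0 ≤ K := (abs_nonneg _).trans (hf 0 (left_mem_Icc.2 zero_le_one))
  calc |dirichletSolDeriv f t|
      ≤ |∫ s in t..1, (1 - s) * f s| + |∫ s in 0..t, s * f s| := abs_sub _ _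
    _ ≤ K * ((1 - t) ^ 2 / 2) + K * (t ^ 2 / 2) :=
        add_le_add (abs_integral_one_sub_mul_le hf ht) (abs_integral_id_mul_le hf ht)
    _ = K / 2 - K * (t * (1 - t)) := by ring
    _ ≤ K / 2 := sub_le_self _ (mul_nonneg hK (mul_nonneg ht.1 (sub_nonneg.2 ht.2)))

theorem bvpSol_nonneg (hf : ∀ s ∈ Icc 0 1, 0 ≤ f s) (ht : t ∈ Icc (0:ℝ) 1) :
    0 ≤ bvpSol f t :=
  integral_nonneg ht.1 fun _ hs => dirichletSol_nonneg hf ⟨hs.1, hs.2.trans ht.2⟩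

theorem abs_bvpSol_le (hf : ∀ s ∈ Icc 0 1, |f s| ≤ K) (ht : t ∈ Icc (0:ℝ) 1) :
    |bvpSol f t| ≤ K / 12 := by
  have hK : 0 ≤ K := (abs_nonneg _).trans (hf 0 (left_mem_Icc.2 zero_le_one))
  have h := norm_integral_le_of_norm_le (μ := MeasureTheory.volume) (f := dirichletSol f)
    (g := fun s => K / 2 * (s - s ^ 2)) ht.1
    (.of_forall fun s hs => (abs_dirichletSol_le hf ⟨hs.1.le, hs.2.trans ht.2⟩).trans_eq (by ring))
    (Continuous.intervalIntegrable (by fun_prop) _ _)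
  rw [integral_const_mul, integral_sub intervalIntegrable_id (intervalIntegrable_pow 2),
    integral_id, integral_pow] at h
  refine h.trans ?_
  have : 0 ≤ K * ((1 - t) ^ 2 * (1 + 2 * t)) := by have := ht.1; positivity
  linarith

theorem monotoneOn_bvpSol (hf : Continuous f) (hf₀ : ∀ s ∈ Icc 0 1, 0 ≤ f s) :
    MonotoneOn (bvpSol f) (Icc 0 1) := by
  refine monotoneOn_of_deriv_nonneg (convex_Icc 0 1) (contDiff_bvpSol hf).continuous.continuousOn
    (fun t _ => (hasDerivAt_bvpSol hf t).differentiableAt.differentiableWithinAt) fun t ht => ?_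
  rw [interior_Icc] at ht
  rw [deriv_bvpSol hf]
  exact dirichletSol_nonneg hf₀ (Ioo_subset_Icc_self ht)

end Bounds

theorem abs_exp_sub_exp_le {x y c : ℝ} (hx : x ≤ c) (hy : y ≤ c) :
    |Real.exp x - Real.exp y| ≤ Real.exp c * |x - y| := by
  simpa only [Real.norm_eq_abs] using
    (convex_Iic c).norm_image_sub_le_of_norm_deriv_le (fun z _ => Real.differentiableAt_exp)
      (fun z hz => by
        rw [Real.deriv_exp, Real.norm_eq_abs, abs_of_pos (Real.exp_pos z)]
        exact Real.exp_le_exp.2 hz)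
      hy hx

theorem exp_one_point_one_div_twelve_le : Real.exp (1.1 / 12) ≤ 1.1 := by
  refine (Real.exp_bound' (by norm_num) (by norm_num) (n := 3) (by norm_num)).trans ?_
  norm_num [Finset.sum_range_succ, Nat.factorial]

def admissible : Set C(Icc (0:ℝ) 1, ℝ) := {g | ∀ x, g x ∈ Icc 0 (1.1 / 12)}

theorem isClosed_admissible : IsClosed admissible := by
  simp only [admissible, ofPred_forall]
  exact isClosed_iInter fun x => isClosed_Icc.preimage (continuous_eval_const x)

instance : CompleteSpace admissible := isClosed_admissible.completeSpace_coe

instance : Nonempty admissible := ⟨⟨0, fun _ => by norm_num⟩⟩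

noncomputable def expRhs (g : C(Icc (0:ℝ) 1, ℝ)) (s : ℝ) : ℝ :=
  Real.exp (IccExtend zero_le_one g s)

section ExpRhs

variable {g h : C(Icc (0:ℝ) 1, ℝ)}

theorem continuous_expRhs : Continuous (expRhs g) :=
  Real.continuous_exp.comp (continuous_IccExtend_iff.2 g.continuous)

theorem expRhs_nonneg (s : ℝ) : 0 ≤ expRhs g s := (Real.exp_pos _).le

theorem abs_expRhs_le (hg : g ∈ admissible) (s : ℝ) : |expRhs g s| ≤ 1.1 := by
  rw [abs_of_nonneg (expRhs_nonneg s)]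
  exact (Real.exp_le_exp.2 (hg _).2).trans exp_one_point_one_div_twelve_le

theorem abs_expRhs_sub_le (hg : g ∈ admissible) (hh : h ∈ admissible) (s : ℝ) :
    |expRhs g s - expRhs h s| ≤ 1.1 * dist g h :=
  calc |expRhs g s - expRhs h s|
      ≤ Real.exp (1.1 / 12) * |IccExtend zero_le_one g s - IccExtend zero_le_one h s| :=
        abs_exp_sub_exp_le (hg _).2 (hh _).2
    _ ≤ 1.1 * dist g h := by
        gcongr
        · exact exp_one_point_one_div_twelve_le
        · rw [← Real.dist_eq]
          exact ContinuousMap.dist_apply_le_dist _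

theorem expRhs_eqOn {v : ℝ → ℝ} (hvg : ∀ x : Icc (0:ℝ) 1, v x = g x) :
    EqOn (expRhs g) (fun t => Real.exp (v t)) (Icc 0 1) := fun t ht => by
  simp only [expRhs, IccExtend_of_mem _ _ ht, hvg ⟨t, ht⟩]

end ExpRhs

theorem bvpSol_expRhs_mem {g : C(Icc (0:ℝ) 1, ℝ)} (hg : g ∈ admissible) {t : ℝ}
    (ht : t ∈ Icc (0:ℝ) 1) : bvpSol (expRhs g) t ∈ Icc 0 (1.1 / 12) :=
  ⟨bvpSol_nonneg (fun s _ => expRhs_nonneg s) ht,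
    (le_abs_self _).trans (abs_bvpSol_le (fun s _ => abs_expRhs_le hg s) ht)⟩

noncomputable def solutionMap (g : admissible) : admissible :=
  ⟨(⟨bvpSol (expRhs g), (contDiff_bvpSol continuous_expRhs).continuous⟩ : C(ℝ, ℝ)).restrict _,
    fun x => bvpSol_expRhs_mem g.2 x.2⟩

theorem solutionMap_eq_self_iff {g : admissible} :
    solutionMap g = g ↔ ∀ x : Icc (0:ℝ) 1, bvpSol (expRhs g) x = g.1 x := by
  rw [Subtype.ext_iff, ContinuousMap.ext_iff]
  rfl

theorem contractingWith_solutionMap : ContractingWith (11 / 120) solutionMap := by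
  refine ⟨by rw [← NNReal.coe_lt_coe]; norm_num, .of_dist_le_mul fun g h => ?_⟩
  simp only [Subtype.dist_eq]
  rw [ContinuousMap.dist_le (by positivity)]
  intro x
  have hsub := bvpSol_sub (continuous_expRhs (g := g.1)) (continuous_expRhs (g := h.1)) x.2
  rw [Real.dist_eq]
  change |bvpSol (expRhs g) x - bvpSol (expRhs h) x| ≤ _
  rw [← Pi.sub_apply, ← hsub]
  refine (abs_bvpSol_le (fun s _ => abs_expRhs_sub_le g.2 h.2 s) x.2).trans_eq ?_
  push_cast
  ring

section Solutions

variable {g : C(Icc (0:ℝ) 1, ℝ)}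

theorem inBounds_bvpSol_expRhs (hg : g ∈ admissible) : InBounds (bvpSol (expRhs g)) := by
  intro t ht
  have hK : ∀ s ∈ Icc (0:ℝ) 1, |expRhs g s| ≤ 1.1 := fun s _ => abs_expRhs_le hg s
  rw [deriv_bvpSol continuous_expRhs, deriv_dirichletSol continuous_expRhs]
  refine ⟨bvpSol_expRhs_mem hg ht, ⟨dirichletSol_nonneg (fun s _ => expRhs_nonneg s) ht, ?_⟩,
    abs_dirichletSolDeriv_le hK ht⟩
  have h := (le_abs_self _).trans (abs_dirichletSol_le hK ht)
  nlinarith [sq_nonneg (2 * t - 1)]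

theorem isSolution_bvpSol_expRhs (hfix : ∀ x : Icc (0:ℝ) 1, bvpSol (expRhs g) x = g x) :
    IsSolution (bvpSol (expRhs g)) :=
  (isSolution_iff _).2 <|
    (isBVPSolution_bvpSol continuous_expRhs).congr ((expRhs_eqOn hfix).mono Ioo_subset_Icc_self)

theorem IsSolution.eqOn_bvpSol_expRhs {v : ℝ → ℝ} (hv : IsSolution v)
    (hvg : ∀ x : Icc (0:ℝ) 1, v x = g x) : EqOn v (bvpSol (expRhs g)) (Icc 0 1) :=
  (((isSolution_iff v).1 hv).congr ((expRhs_eqOn hvg).symm.mono Ioo_subset_Icc_self)).eqOn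
    (isBVPSolution_bvpSol continuous_expRhs)

end Solutions

theorem example_7 :
    ∃ u : ℝ → ℝ, (IsSolution u ∧ InBounds u ∧
      (∀ t ∈ Set.Icc (0:ℝ) 1, 0 ≤ u t) ∧ MonotoneOn u (Set.Icc (0:ℝ) 1)) ∧
      ∀ v : ℝ → ℝ, IsSolution v ∧ InBounds v → ∀ t ∈ Set.Icc (0:ℝ) 1, v t = u t := by
  set g := contractingWith_solutionMap.fixedPoint solutionMap
  have hfix := solutionMap_eq_self_iff.1 contractingWith_solutionMap.fixedPoint_isFixedPt
  refine ⟨bvpSol (expRhs g), ⟨isSolution_bvpSol_expRhs hfix, inBounds_bvpSol_expRhs g.2,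
    fun t ht => bvpSol_nonneg (fun s _ => expRhs_nonneg s) ht,
    monotoneOn_bvpSol continuous_expRhs fun s _ => expRhs_nonneg s⟩, ?_⟩
  rintro v ⟨hv, hvb⟩ t ht
  let gv : admissible :=
    ⟨(⟨v, hv.1.continuous⟩ : C(ℝ, ℝ)).restrict (Icc 0 1), fun x => (hvb x x.2).1⟩
  have hgv : gv = g := contractingWith_solutionMap.fixedPoint_unique <|
    solutionMap_eq_self_iff.2 fun x => (hv.eqOn_bvpSol_expRhs (g := gv.1) (fun _ => rfl) x.2).symm
  calc v t = gv.1 ⟨t, ht⟩ := rfl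
    _ = g.1 ⟨t, ht⟩ := by rw [hgv]
    _ = bvpSol (expRhs g) t := (hfix ⟨t, ht⟩).symm
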